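/- Let A be an M×N quaternion matrix with A = A_h + A_v·j (A_h, A_v complex matrices). If A is a perfect quaternion array, i.e., R_A(m,n) = 0 for all (m,n) ≠ (0,0), then R_{A_h}(m,n) + R_{A_v}(m,n) = 0 for all (m,n) ≠ (0,0); that is, A_h and A_v form a periodic complementary pair. -/

import Mathlib

noncomputable section
open scoped BigOperators

/-- Embedding of ℂ into the quaternions (zero j and k components). -/
def cq (z : ℂ) : Quaternion ℝ := ⟨z.re, z.im, 0, 0⟩

/-- The quaternion unit i. -/
def qi : Quaternion ℝ := ⟨0, 1, 0, 0⟩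

/-- The quaternion unit j. -/
def qj : Quaternion ℝ := ⟨0, 0, 1, 0⟩

/-- The quaternion unit k. -/
def qk : Quaternion ℝ := ⟨0, 0, 0, 1⟩

/-- Conjugate-free periodic cross-correlation of quaternion matrices. -/
def qcorr {M N : ℕ} [NeZero M] [NeZero N]
    (X Y : Matrix (ZMod M) (ZMod N) (Quaternion ℝ)) :
    Matrix (ZMod M) (ZMod N) (Quaternion ℝ) :=
  fun m n => ∑ k, ∑ l, X k l * Y (k + m) (l + n)

/-- Right periodic autocorrelation of a quaternion matrix. -/
def Rq {M N : ℕ} [NeZero M] [NeZero N]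
    (A : Matrix (ZMod M) (ZMod N) (Quaternion ℝ)) :
    Matrix (ZMod M) (ZMod N) (Quaternion ℝ) :=
  qcorr A (fun k l => star (A k l))

/-- Conjugate-free periodic cross-correlation of complex matrices. -/
def ccorr {M N : ℕ} [NeZero M] [NeZero N]
    (X Y : Matrix (ZMod M) (ZMod N) ℂ) : Matrix (ZMod M) (ZMod N) ℂ :=
  fun m n => ∑ k, ∑ l, X k l * Y (k + m) (l + n)

/-- Complex 2D periodic autocorrelation. -/
def Rc {M N : ℕ} [NeZero M] [NeZero N]
    (A : Matrix (ZMod M) (ZMod N) ℂ) : Matrix (ZMod M) (ZMod N) ℂ :=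
  ccorr A (fun k l => star (A k l))


/-!
Write quaternions in the Cayley–Dickson form `z + w j` with `z w : ℂ`. Since `j z = z̄ j`,
`(a + b j) (c + d j)* = (a c̄ + b d̄) + (b c - a d) j`; summing over the array, the complex part of
`R_A(m,n)` is `R_{A_h}(m,n) + R_{A_v}(m,n)`. As `ℍ = ℂ ⊕ ℂ j`, it vanishes whenever `R_A(m,n)` does.
-/

lemma cq_eq_ofComplex (z : ℂ) : cq z = Quaternion.ofComplex z := rfl

@[simp] lemma re_qj : qj.re = 0 := rfl
@[simp] lemma imI_qj : qj.imI = 0 := rfl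
@[simp] lemma imJ_qj : qj.imJ = 1 := rfl
@[simp] lemma imK_qj : qj.imK = 0 := rfl

lemma cq_add_cq_mul_qj_eq_zero_iff {z w : ℂ} : cq z + cq w * qj = 0 ↔ z = 0 ∧ w = 0 := by
  simp [Quaternion.ext_iff, Complex.ext_iff, cq_eq_ofComplex, Quaternion.re_zero,
    Quaternion.imI_zero, Quaternion.imJ_zero, Quaternion.imK_zero, and_assoc]

lemma cq_add_cq_mul_qj_mul_star (a b c d : ℂ) :
    (cq a + cq b * qj) * star (cq c + cq d * qj)
      = cq (a * star c + b * star d) + cq (b * c - a * d) * qj := by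
  ext <;> simp [cq_eq_ofComplex] <;> ring

lemma Rq_cq_add_cq_mul_qj {M N : ℕ} [NeZero M] [NeZero N]
    (X Y : Matrix (ZMod M) (ZMod N) ℂ) (m : ZMod M) (n : ZMod N) :
    Rq (fun k l => cq (X k l) + cq (Y k l) * qj) m n
      = cq (Rc X m n + Rc Y m n) + cq (ccorr Y X m n - ccorr X Y m n) * qj := by
  simp only [Rq, qcorr, cq_add_cq_mul_qj_mul_star]
  simp only [Rc, ccorr, cq_eq_ofComplex, map_add, map_sub, map_sum, sub_mul,
    Finset.sum_mul, Finset.sum_add_distrib, Finset.sum_sub_distrib]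

theorem pqa_components_form_pcp {M N : ℕ} [NeZero M] [NeZero N]
    (Ah Av : Matrix (ZMod M) (ZMod N) ℂ)
    (A : Matrix (ZMod M) (ZMod N) (Quaternion ℝ))
    (hA : ∀ k l, A k l = cq (Ah k l) + cq (Av k l) * qj)
    (hperf : ∀ m n, (m, n) ≠ (0, 0) → Rq A m n = 0) :
    ∀ m n, (m, n) ≠ (0, 0) → Rc Ah m n + Rc Av m n = 0 := by
  intro m n hmn
  obtain rfl : A = fun k l => cq (Ah k l) + cq (Av k l) * qj := funext fun k => funext (hA k)
  have hRq := hperf m n hmn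
  rw [Rq_cq_add_cq_mul_qj, cq_add_cq_mul_qj_eq_zero_iff] at hRq
  exact hRq.1
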